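/- arXiv:1203.6796 — 9 statements merged into one kernel-verified Lean document; each statement's English description precedes it below -/
import Mathlib

section
/- Every natural transformation w from the functor S ↦ ∏_{n∈ℕ} S to the identity functor S ↦ S on the category of commutative R-algebras, such that each component w_S is S-linear, is given by a finite linear combination: there exist m ∈ ℕ and λ_1,…,λ_m ∈ R such that w_S((s_n)_n) = λ_1 s_1 + ⋯ + λ_m s_m for every commutative R-algebra S and every (s_n)_n ∈ ∏_ℕ S. -/
/-!
By Yoneda, `w` is determined by its value `p = w (X₀, X₁, …)` on the polynomial ring
`R[X₀, X₁, …]`: naturality along `aeval s` gives `w S s = p(s)`. Since `p` involves only finitely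
many variables `X₀, …, X_{m-1}`, `w S s` depends only on `s₀, …, s_{m-1}`, and `S`-linearity
writes it as `∑ sᵢ · w S eᵢ`; naturality along `R → S` identifies `w S eᵢ` with the image of
`w R eᵢ`.
-/

open MvPolynomial Finset

theorem MvPolynomial.aeval_congr_vars {σ R S : Type*} [CommSemiring R] [CommSemiring S]
    [Algebra R S] (p : MvPolynomial σ R) {g₁ g₂ : σ → S} (h : ∀ i ∈ p.vars, g₁ i = g₂ i) :
    aeval g₁ p = aeval g₂ p :=
  eval₂Hom_congr' rfl (fun i hi _ => h i hi) rfl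

theorem LinearMap.eq_sum_range_of_eqOn_lt {S : Type*} [CommSemiring S] (f : (ℕ → S) →ₗ[S] S)
    {m : ℕ} (hf : ∀ s t : ℕ → S, (∀ i < m, s i = t i) → f s = f t) (s : ℕ → S) :
    f s = ∑ i ∈ Finset.range m, s i * f (Pi.single i 1) := by
  have htrunc : ∀ i < m, s i = (∑ j ∈ Finset.range m, Pi.single j (s j) : ℕ → S) i := by
    intro i hi
    simp [Finset.sum_apply, Finset.sum_pi_single, hi]
  rw [hf s _ htrunc, map_sum]
  refine sum_congr rfl fun i _ => ?_
  rw [← smul_eq_mul, ← map_smul, ← Pi.single_smul', smul_eq_mul, mul_one]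

def IsNatural {R : Type} [CommRing R]
    (w : ∀ (S : Type) [CommRing S] [Algebra R S], (ℕ → S) →ₗ[S] S) : Prop :=
  ∀ (S S' : Type) [CommRing S] [Algebra R S] [CommRing S'] [Algebra R S']
      (φ : S →ₐ[R] S') (s : ℕ → S), w S' (fun n => φ (s n)) = φ (w S s)

namespace IsNatural

variable {R : Type} [CommRing R] {w : ∀ (S : Type) [CommRing S] [Algebra R S], (ℕ → S) →ₗ[S] S}

theorem eq_aeval (hw : IsNatural w) (S : Type) [CommRing S] [Algebra R S] (s : ℕ → S) :
    w S s = aeval s (w (MvPolynomial ℕ R) X) := by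
  simpa only [aeval_X] using hw _ S (aeval s) X

theorem map_algebraMap (hw : IsNatural w) (S : Type) [CommRing S] [Algebra R S] (s : ℕ → R) :
    w S (fun n => algebraMap R S (s n)) = algebraMap R S (w R s) :=
  hw R S (Algebra.ofId R S) s

theorem exists_eq_of_eqOn_lt (hw : IsNatural w) :
    ∃ m : ℕ, ∀ (S : Type) [CommRing S] [Algebra R S] (s t : ℕ → S),
      (∀ i < m, s i = t i) → w S s = w S t := by
  obtain ⟨m, hm⟩ := exists_nat_subset_range (w (MvPolynomial ℕ R) X).vars
  refine ⟨m, fun S _ _ s t hst => ?_⟩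
  rw [hw.eq_aeval S s, hw.eq_aeval S t]
  exact aeval_congr_vars _ fun i hi => hst i (mem_range.mp (hm hi))

end IsNatural

/-- Every `R`-linear natural transformation `w` from the functor
`S ↦ ∏_{n ∈ ℕ} S` to the identity functor `S ↦ S`, on the category of commutative
`R`-algebras, is given by a finite linear combination with coefficients in `R`. -/
theorem statement0 (R : Type) [CommRing R]
    (w : ∀ (S : Type) [CommRing S] [Algebra R S], (ℕ → S) →ₗ[S] S)
    (hnat : ∀ (S S' : Type) [CommRing S] [Algebra R S] [CommRing S'] [Algebra R S']
      (φ : S →ₐ[R] S') (s : ℕ → S), w S' (fun n => φ (s n)) = φ (w S s)) :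
    ∃ (m : ℕ) (l : Fin m → R),
      ∀ (S : Type) [CommRing S] [Algebra R S] (s : ℕ → S),
        w S s = ∑ i : Fin m, algebraMap R S (l i) * s i := by
  have hw : IsNatural w := hnat
  obtain ⟨m, hm⟩ := hw.exists_eq_of_eqOn_lt
  refine ⟨m, fun i => w R (Pi.single i 1), fun S _ _ s => ?_⟩
  rw [(w S).eq_sum_range_of_eqOn_lt (hm S) s, ← Fin.sum_univ_eq_sum_range]
  refine sum_congr rfl fun i _ => ?_
  rw [mul_comm, ← hw.map_algebraMap]
  congr 2
  ext n
  rw [Pi.apply_single (fun _ => algebraMap R S) (fun _ => map_zero _), map_one]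
end

section
/- For every commutative R-algebra S and every natural transformation f from the functor S' ↦ M ⊗_R S' to a functor of modules 𝕄 (with each component f_{S'} being S'-linear), f is uniquely determined by its component f_R : M → 𝕄(R); that is, the map Hom_𝒦(ℳ, 𝕄) → Hom_R(M, 𝕄(R)), f ↦ f_R, is a bijection. -/
open TensorProduct

universe v

/-- The data of a (covariant) functor of modules on the category of commutative
`R`-algebras: an `S`-module `obj S` for every commutative `R`-algebra `S`, together
with transition maps along `R`-algebra homomorphisms. -/
structure ModuleFunctorData (R : Type) [CommRing R] : Type (v + 1) where
  obj : ∀ (S : Type) [CommRing S] [Algebra R S], Type v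
  addCommGroup : ∀ (S : Type) [CommRing S] [Algebra R S], AddCommGroup (obj S)
  module : ∀ (S : Type) [CommRing S] [Algebra R S],
    @Module S (obj S) _ (addCommGroup S).toAddCommMonoid
  map : ∀ {S S' : Type} [CommRing S] [Algebra R S] [CommRing S'] [Algebra R S'],
    (S →ₐ[R] S') → obj S → obj S'

attribute [instance] ModuleFunctorData.addCommGroup ModuleFunctorData.module

/-- A functor of `𝒦`-modules: a functor from commutative `R`-algebras to abelian groups
with a functorial module structure. -/
structure ModuleFunctor (R : Type) [CommRing R] extends ModuleFunctorData.{v} R :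
    Type (v + 1) where
  map_add : ∀ {S S' : Type} [CommRing S] [Algebra R S] [CommRing S'] [Algebra R S']
    (φ : S →ₐ[R] S') (x y : obj S), map φ (x + y) = map φ x + map φ y
  map_smul : ∀ {S S' : Type} [CommRing S] [Algebra R S] [CommRing S'] [Algebra R S']
    (φ : S →ₐ[R] S') (s : S) (x : obj S), map φ (s • x) = φ s • map φ x
  map_id : ∀ (S : Type) [CommRing S] [Algebra R S] (x : obj S), map (AlgHom.id R S) x = x
  map_comp : ∀ {S S' S'' : Type} [CommRing S] [Algebra R S] [CommRing S'] [Algebra R S']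
    [CommRing S''] [Algebra R S''] (φ : S →ₐ[R] S') (ψ : S' →ₐ[R] S'') (x : obj S),
    map (ψ.comp φ) x = map ψ (map φ x)

/-- Natural `R`-linear transformations from a functor of modules `F` to the
quasi-coherent module `𝒩 : S ↦ S ⊗_R N` associated with an `R`-module `N`. -/
def QCHom (R : Type) [CommRing R] (F : ModuleFunctor.{v} R) (N : Type) [AddCommGroup N]
    [Module R N] :=
  {f : ∀ (S : Type) [CommRing S] [Algebra R S], F.obj S →ₗ[S] S ⊗[R] N //
    ∀ (S S' : Type) [CommRing S] [Algebra R S] [CommRing S'] [Algebra R S']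
      (φ : S →ₐ[R] S') (x : F.obj S),
      f S' (F.map φ x) = LinearMap.rTensor N φ.toLinearMap (f S x)}

/-! Since `S ⊗[R] M` is spanned over `S` by the image of `R ⊗[R] M` under `R → S`, naturality
along `Algebra.ofId R S` forces `f_S (s ⊗ m) = s • 𝕄(R → S) (f_R m)`; conversely this formula
is a natural transformation, because every `R`-algebra map `S → S'` commutes with the structure
maps `R → S`, `R → S'`. -/

namespace ModuleFunctor

variable {R : Type} [CommRing R] (F : ModuleFunctor.{v} R)

theorem map_zero {S S' : Type} [CommRing S] [Algebra R S] [CommRing S'] [Algebra R S']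
    (φ : S →ₐ[R] S') : F.map φ (0 : F.obj S) = 0 := by
  rw [← zero_smul S (0 : F.obj S), F.map_smul, _root_.map_zero, zero_smul]

variable {M : Type} [AddCommGroup M] [Module R M]

def IsNatural (f : ∀ (S : Type) [CommRing S] [Algebra R S], S ⊗[R] M →ₗ[S] F.obj S) : Prop :=
  ∀ (S S' : Type) [CommRing S] [Algebra R S] [CommRing S'] [Algebra R S']
    (φ : S →ₐ[R] S') (x : S ⊗[R] M),
    f S' (LinearMap.rTensor M φ.toLinearMap x) = F.map φ (f S x)

section liftBaseChange

variable (g : M →ₗ[R] F.obj R) (S : Type) [CommRing S] [Algebra R S]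

@[reducible]
def restrictScalarsModule : Module R (F.obj S) := Module.compHom _ (algebraMap R S)

attribute [local instance] restrictScalarsModule

theorem restrictScalars_isScalarTower : IsScalarTower R S (F.obj S) :=
  ⟨fun r s x => by
    change (r • s) • x = algebraMap R S r • s • x
    rw [Algebra.smul_def, mul_smul]⟩

attribute [local instance] restrictScalars_isScalarTower

/-- The natural transformation `ℳ → 𝕄` with component `g` at `R`. -/
noncomputable def liftBaseChange : S ⊗[R] M →ₗ[S] F.obj S :=
  LinearMap.liftBaseChange S
    { toFun := fun m => F.map (Algebra.ofId R S) (g m)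
      map_add' := fun x y => by rw [_root_.map_add, F.map_add]
      map_smul' := fun r m => by
        change F.map (Algebra.ofId R S) (g (r • m)) = algebraMap R S r • _
        rw [_root_.map_smul, F.map_smul, Algebra.ofId_apply] }

theorem liftBaseChange_tmul (s : S) (m : M) :
    F.liftBaseChange g S (s ⊗ₜ m) = s • F.map (Algebra.ofId R S) (g m) :=
  rfl

end liftBaseChange

theorem liftBaseChange_self_one_tmul (g : M →ₗ[R] F.obj R) (m : M) :
    F.liftBaseChange g R (1 ⊗ₜ m) = g m := by
  rw [liftBaseChange_tmul, one_smul, Algebra.ofId_self, F.map_id]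

theorem isNatural_liftBaseChange (g : M →ₗ[R] F.obj R) :
    F.IsNatural (fun S _ _ => F.liftBaseChange g S) := by
  intro S S' _ _ _ _ φ x
  induction x with
  | zero => rw [_root_.map_zero, _root_.map_zero, _root_.map_zero, F.map_zero]
  | tmul s m =>
    rw [LinearMap.rTensor_tmul, AlgHom.toLinearMap_apply, liftBaseChange_tmul,
      liftBaseChange_tmul, F.map_smul, ← F.map_comp, Algebra.comp_ofId]
  | add x y hx hy => rw [_root_.map_add, _root_.map_add, hx, hy, _root_.map_add, F.map_add]

theorem eq_liftBaseChange_of_isNatural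
    {f : ∀ (S : Type) [CommRing S] [Algebra R S], S ⊗[R] M →ₗ[S] F.obj S}
    (hf : F.IsNatural f) (S : Type) [CommRing S] [Algebra R S] :
    f S = F.liftBaseChange (f R ∘ₗ (TensorProduct.lid R M).symm.toLinearMap) S := by
  ext x
  induction x with
  | zero => rw [_root_.map_zero, _root_.map_zero]
  | tmul s m =>
    have h_tmul : (s ⊗ₜ m : S ⊗[R] M) =
        s • LinearMap.rTensor M (Algebra.ofId R S).toLinearMap ((1 : R) ⊗ₜ m) := by
      rw [LinearMap.rTensor_tmul, AlgHom.toLinearMap_apply, map_one, TensorProduct.smul_tmul',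
        smul_eq_mul, mul_one]
    calc f S (s ⊗ₜ m) = s • F.map (Algebra.ofId R S) (f R (1 ⊗ₜ m)) := by
          rw [h_tmul, _root_.map_smul, hf]
      _ = _ := rfl
  | add x y hx hy => rw [_root_.map_add, _root_.map_add, hx, hy]

end ModuleFunctor

/-- For every `R`-module `M` and every functor of modules `𝕄`, a natural
linear transformation `f : ℳ → 𝕄` from the quasi-coherent module `ℳ : S ↦ S ⊗_R M` is
uniquely determined by its component at `R`: the map
`Hom_𝒦(ℳ, 𝕄) → Hom_R(M, 𝕄(R))`, `f ↦ f_R`, is a bijection. -/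
theorem statement1 (R : Type) [CommRing R] (M : Type) [AddCommGroup M] [Module R M]
    (F : ModuleFunctor.{0} R) :
    Function.Bijective
      (fun f : {f : ∀ (S : Type) [CommRing S] [Algebra R S], (S ⊗[R] M) →ₗ[S] F.obj S //
          ∀ (S S' : Type) [CommRing S] [Algebra R S] [CommRing S'] [Algebra R S']
            (φ : S →ₐ[R] S') (x : S ⊗[R] M),
            f S' (LinearMap.rTensor M φ.toLinearMap x) = F.map φ (f S x)} =>
        (f.1 R) ∘ₗ (TensorProduct.lid R M).symm.toLinearMap) := by
  constructor
  · rintro ⟨f, hf⟩ ⟨f', hf'⟩ h_component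
    refine Subtype.ext (funext fun S => funext fun _ => funext fun _ => ?_)
    change f S = f' S
    rw [F.eq_liftBaseChange_of_isNatural hf, F.eq_liftBaseChange_of_isNatural hf']
    exact congrArg (F.liftBaseChange · S) h_component
  · intro g
    refine ⟨⟨fun S _ _ => F.liftBaseChange g S, F.isNatural_liftBaseChange g⟩, ?_⟩
    ext m
    exact F.liftBaseChange_self_one_tmul g m
end

section
/- For every R-module M, the map M → Hom_𝒦(ℳ*, 𝒦) sending m to the natural transformation w ↦ w(m) is a bijection; i.e., quasi-coherent functors of modules are reflexive: ℳ** = ℳ, even when M is not finitely generated. -/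
/-!
Let `R ⊕ M` be the trivial square-zero extension and `a := f (inr)` the value of `f` at the
tautological point `inr : M → R ⊕ M`. Naturality along the projection `R ⊕ M → R` kills the
`R`-component of `a`, so `a = inr m`. For any `w : M → S`, the `R`-algebra map
`R ⊕ M → S[ε]`, `(r, x) ↦ r + w(x) ε`, carries `inr` to `ε • w`; naturality along it and
`S[ε]`-linearity of `f` give `ε f(w) = ε w(m)`, that is, `f(w) = w(m)`. Uniqueness of `m` is
read off at `inr`.
-/

open TrivSqZeroExt DualNumber

section

variable {R M : Type} [CommRing R] [AddCommGroup M] [Module R M]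

def IsNaturalOnAlgebras (f : ∀ (S : Type) [CommRing S] [Algebra R S], (M →ₗ[R] S) →ₗ[S] S) :
    Prop :=
  ∀ (S S' : Type) [CommRing S] [Algebra R S] [CommRing S'] [Algebra R S']
    (φ : S →ₐ[R] S') (w : M →ₗ[R] S), f S' (φ.toLinearMap ∘ₗ w) = φ (f S w)

variable {S : Type} [CommRing S] [Algebra R S]

def liftToDualNumber [Module Rᵐᵒᵖ M] [IsCentralScalar R M] (w : M →ₗ[R] S) :
    TrivSqZeroExt R M →ₐ[R] S[ε] :=
  liftEquivOfComm ⟨(inrHom S S).restrictScalars R ∘ₗ w, fun x y => inr_mul_inr S (w x) (w y)⟩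

theorem liftToDualNumber_inr [Module Rᵐᵒᵖ M] [IsCentralScalar R M] (w : M →ₗ[R] S) (x : M) :
    liftToDualNumber w (inr x) = inr (w x) := by
  rw [liftToDualNumber, liftEquivOfComm_apply, lift_apply_inr]
  rfl

theorem liftToDualNumber_comp_inrHom [Module Rᵐᵒᵖ M] [IsCentralScalar R M] (w : M →ₗ[R] S) :
    (liftToDualNumber w).toLinearMap ∘ₗ inrHom R M = (inrHom S S).restrictScalars R ∘ₗ w :=
  LinearMap.ext (liftToDualNumber_inr w)

variable {f : ∀ (S : Type) [CommRing S] [Algebra R S], (M →ₗ[R] S) →ₗ[S] S}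

theorem IsNaturalOnAlgebras.apply_inrHom_comp (hf : IsNaturalOnAlgebras f) (w : M →ₗ[R] S) :
    f S[ε] ((inrHom S S).restrictScalars R ∘ₗ w) = inr (f S w) := by
  have eps_mul_inl (s : S) : (ε : S[ε]) * inl s = inr s := by
    rw [commute_eps_left, inl_mul_eq_smul, inr_eq_smul_eps]
  have hw : (inrHom S S).restrictScalars R ∘ₗ w =
      (ε : S[ε]) • ((inlAlgHom R S S).toLinearMap ∘ₗ w) :=
    LinearMap.ext fun x => (eps_mul_inl (w x)).symm
  rw [hw, map_smul, hf, smul_eq_mul, inlAlgHom_apply, eps_mul_inl]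

theorem IsNaturalOnAlgebras.fst_apply_inrHom [Module Rᵐᵒᵖ M] [IsCentralScalar R M]
    (hf : IsNaturalOnAlgebras f) : (f (TrivSqZeroExt R M) (inrHom R M)).fst = 0 := by
  have h0 : (fstHom R R M).toLinearMap ∘ₗ inrHom R M = 0 := by
    ext x
    simp
  simpa [h0] using (hf _ R (fstHom R R M) (inrHom R M)).symm

theorem IsNaturalOnAlgebras.apply_eq_apply_snd [Module Rᵐᵒᵖ M] [IsCentralScalar R M]
    (hf : IsNaturalOnAlgebras f) (w : M →ₗ[R] S) :
    f S w = w (f (TrivSqZeroExt R M) (inrHom R M)).snd := by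
  set a := f (TrivSqZeroExt R M) (inrHom R M)
  have ha : a = inr a.snd := ext hf.fst_apply_inrHom rfl
  apply inr_injective (R := S)
  calc inr (f S w)
      = f S[ε] ((inrHom S S).restrictScalars R ∘ₗ w) := (hf.apply_inrHom_comp w).symm
    _ = f S[ε] ((liftToDualNumber w).toLinearMap ∘ₗ inrHom R M) := by
      rw [liftToDualNumber_comp_inrHom]
    _ = liftToDualNumber w a := hf _ _ _ _
    _ = inr (w a.snd) := by rw [ha, liftToDualNumber_inr]; rfl

end

/-- Quasi-coherent modules are reflexive, `ℳ** = ℳ`, for an arbitrary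
`R`-module `M`: every natural transformation `f : ℳ* → 𝒦` with `S`-linear components
(where `ℳ*(S) = Hom_R(M,S)` and `𝒦(S) = S`) is evaluation at a unique element `m ∈ M`;
that is, `m ↦ (w ↦ w m)` is a bijection `M → Hom_𝒦(ℳ*, 𝒦)`. -/
theorem statement4 (R : Type) [CommRing R] (M : Type) [AddCommGroup M] [Module R M]
    (f : {f : ∀ (S : Type) [CommRing S] [Algebra R S], (M →ₗ[R] S) →ₗ[S] S //
        ∀ (S S' : Type) [CommRing S] [Algebra R S] [CommRing S'] [Algebra R S']
          (φ : S →ₐ[R] S') (w : M →ₗ[R] S),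
          f S' (φ.toLinearMap ∘ₗ w) = φ (f S w)}) :
    ∃! m : M, ∀ (S : Type) [CommRing S] [Algebra R S] (w : M →ₗ[R] S),
      f.1 S w = w m := by
  -- the symmetric bimodule structure that makes `TrivSqZeroExt R M` an `R`-algebra
  let _ : Module Rᵐᵒᵖ M := Module.compHom M ((RingHom.id R).fromOpposite mul_comm)
  have _ : IsCentralScalar R M := ⟨fun _ _ => rfl⟩
  have hf : IsNaturalOnAlgebras f.1 := f.2
  refine ⟨_, fun S _ _ => hf.apply_eq_apply_snd, fun m hm => ?_⟩
  simpa using congrArg snd (hm _ (inrHom R M)).symm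
end

section
/- (Adjoint functors formula) Let i : R → S be a morphism of commutative rings, 𝕄 a functor of modules on commutative R-algebras, and 𝕄' a functor of modules on commutative S-algebras. Then there is a natural bijection between natural S-linear transformations from the restriction i*𝕄 (S' ↦ 𝕄(S')) to 𝕄', and natural R-linear transformations from 𝕄 to i_*𝕄' (R' ↦ 𝕄'(S ⊗_R R')). -/
/-!
A natural `R`-linear `h : 𝕄 → i_*𝕄'` yields `g_T := 𝕄'(μ_T) ∘ h_T` on `S`-algebras `T`, where
`μ_T : S ⊗_R T → T` is the multiplication, the counit of the adjunction between `S ⊗_R -` and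
restriction of scalars. Conversely naturality of `g` along `μ_T` forces this formula for `g`.
Both directions reduce to the two triangle identities of that adjunction.
-/

open TensorProduct

universe v

universe u

noncomputable abbrev baseChangeCounit (R S T : Type) [CommRing R] [CommRing S] [Algebra R S]
    [CommRing T] [Algebra R T] [Algebra S T] [IsScalarTower R S T] : S ⊗[R] T →ₐ[S] T :=
  Algebra.TensorProduct.productLeftAlgHom (Algebra.ofId S T) (AlgHom.id R T)

section Counit

variable (R S : Type) [CommRing R] [CommRing S] [Algebra R S]

theorem baseChangeCounit_comp_includeRight (T : Type) [CommRing T] [Algebra R T] [Algebra S T]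
    [IsScalarTower R S T] :
    ((baseChangeCounit R S T).restrictScalars R).comp Algebra.TensorProduct.includeRight =
      AlgHom.id R T := by
  ext t
  simp

theorem baseChangeCounit_comp_map_includeRight (T : Type) [CommRing T] [Algebra R T] :
    (baseChangeCounit R S (S ⊗[R] T)).comp
        (Algebra.TensorProduct.map (AlgHom.id S S) Algebra.TensorProduct.includeRight) =
      AlgHom.id S (S ⊗[R] T) := by
  ext
  simp

theorem baseChangeCounit_naturality {T T' : Type} [CommRing T] [Algebra R T] [Algebra S T]
    [IsScalarTower R S T] [CommRing T'] [Algebra R T'] [Algebra S T'] [IsScalarTower R S T']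
    (φ : T →ₐ[S] T') :
    (baseChangeCounit R S T').comp
        (Algebra.TensorProduct.map (AlgHom.id S S) (φ.restrictScalars R)) =
      φ.comp (baseChangeCounit R S T) := by
  ext
  simp

end Counit

namespace ModuleFunctor

variable {R S : Type} [CommRing R] [CommRing S] [Algebra R S]
  {F : ModuleFunctor.{u} R} {G : ModuleFunctor.{v} S}

theorem map_map {T T' T'' : Type} [CommRing T] [Algebra S T]
    [CommRing T'] [Algebra S T'] [CommRing T''] [Algebra S T''] (φ : T →ₐ[S] T')
    (ψ : T' →ₐ[S] T'') (x : G.obj T) : G.map ψ (G.map φ x) = G.map (ψ.comp φ) x :=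
  (G.map_comp φ ψ x).symm

variable (h : ∀ (R' : Type) [CommRing R'] [Algebra R R'], F.obj R' → G.obj (S ⊗[R] R'))
  (h_add : ∀ (R' : Type) [CommRing R'] [Algebra R R'] (x y : F.obj R'),
    h R' (x + y) = h R' x + h R' y)
  (h_smul : ∀ (R' : Type) [CommRing R'] [Algebra R R'] (r : R') (x : F.obj R'),
    h R' (r • x) = (Algebra.TensorProduct.includeRight r : S ⊗[R] R') • h R' x)

noncomputable def restrictionAdjoint (T : Type) [CommRing T] [Algebra R T] [Algebra S T]
    [IsScalarTower R S T] :
    F.obj T →ₗ[T] G.obj T where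
  toFun x := G.map (baseChangeCounit R S T) (h T x)
  map_add' x y := by rw [h_add, G.map_add]
  map_smul' t x := by
    rw [RingHom.id_apply, h_smul, G.map_smul]
    simp

theorem restrictionAdjoint_naturality {T T' : Type} [CommRing T] [Algebra R T] [Algebra S T]
    [IsScalarTower R S T] [CommRing T'] [Algebra R T'] [Algebra S T'] [IsScalarTower R S T']
    (h_nat : ∀ (R' R'' : Type) [CommRing R'] [Algebra R R'] [CommRing R''] [Algebra R R'']
      (ψ : R' →ₐ[R] R'') (x : F.obj R'),
      h R'' (F.map ψ x) = G.map (Algebra.TensorProduct.map (AlgHom.id S S) ψ) (h R' x))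
    (φ : T →ₐ[S] T') (x : F.obj T) :
    restrictionAdjoint h h_add h_smul T' (F.map (φ.restrictScalars R) x) =
      G.map φ (restrictionAdjoint h h_add h_smul T x) := by
  simp only [restrictionAdjoint, LinearMap.coe_mk, AddHom.coe_mk]
  rw [h_nat, map_map, map_map, baseChangeCounit_naturality]

theorem restrictionAdjoint_baseChange
    (h_nat : ∀ (R' R'' : Type) [CommRing R'] [Algebra R R'] [CommRing R''] [Algebra R R'']
      (ψ : R' →ₐ[R] R'') (x : F.obj R'),
      h R'' (F.map ψ x) = G.map (Algebra.TensorProduct.map (AlgHom.id S S) ψ) (h R' x))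
    (R' : Type) [CommRing R'] [Algebra R R'] (x : F.obj R') :
    restrictionAdjoint h h_add h_smul (S ⊗[R] R') (F.map Algebra.TensorProduct.includeRight x) =
      h R' x := by
  simp only [restrictionAdjoint, LinearMap.coe_mk, AddHom.coe_mk]
  rw [h_nat, map_map, baseChangeCounit_comp_map_includeRight, G.map_id]

theorem eq_map_baseChangeCounit_of_naturality
    (g : ∀ (T : Type) [CommRing T] [Algebra R T] [Algebra S T] [IsScalarTower R S T],
      F.obj T → G.obj T)
    (hg : ∀ (T T' : Type) [CommRing T] [Algebra R T] [Algebra S T] [IsScalarTower R S T]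
      [CommRing T'] [Algebra R T'] [Algebra S T'] [IsScalarTower R S T']
      (φ : T →ₐ[S] T') (x : F.obj T), g T' (F.map (φ.restrictScalars R) x) = G.map φ (g T x))
    (T : Type) [CommRing T] [Algebra R T] [Algebra S T] [IsScalarTower R S T] (x : F.obj T) :
    g T x = G.map (baseChangeCounit R S T)
      (g (S ⊗[R] T) (F.map Algebra.TensorProduct.includeRight x)) := by
  rw [← hg, ← F.map_comp, baseChangeCounit_comp_includeRight, F.map_id]

end ModuleFunctor

/-- Formula of adjoint functors: for a commutative `R`-algebra `S`, a
functor of modules `𝕄` over commutative `R`-algebras and a functor of modules `𝕄'`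
over commutative `S`-algebras, there is a natural bijection
`Hom_𝒮(i*𝕄, 𝕄') = Hom_𝒦(𝕄, i_*𝕄')`: every natural `R`-linear transformation
`h : 𝕄 → i_*𝕄'` (where `(i_*𝕄')(R') = 𝕄'(S ⊗_R R')`, with `R'`-linearity expressed
through the inclusion `R' → S ⊗_R R'`) corresponds to a unique natural `S`-linear
transformation `g : i*𝕄 → 𝕄'` via `h_{R'} = g_{S ⊗ R'} ∘ (𝕄(R') → 𝕄(S ⊗ R'))`. -/
theorem statement5 (R : Type) [CommRing R] (S : Type) [CommRing S] [Algebra R S]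
    (F : ModuleFunctor.{0} R) (G : ModuleFunctor.{0} S)
    (h : ∀ (R' : Type) [CommRing R'] [Algebra R R'], F.obj R' → G.obj (S ⊗[R] R'))
    (h_add : ∀ (R' : Type) [CommRing R'] [Algebra R R'] (x y : F.obj R'),
      h R' (x + y) = h R' x + h R' y)
    (h_smul : ∀ (R' : Type) [CommRing R'] [Algebra R R'] (r : R') (x : F.obj R'),
      h R' (r • x) = (Algebra.TensorProduct.includeRight r : S ⊗[R] R') • h R' x)
    (h_nat : ∀ (R' R'' : Type) [CommRing R'] [Algebra R R'] [CommRing R''] [Algebra R R'']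
      (ψ : R' →ₐ[R] R'') (x : F.obj R'),
      h R'' (F.map ψ x)
        = G.map (Algebra.TensorProduct.map (AlgHom.id S S) ψ) (h R' x)) :
    ∃! g : {g : ∀ (T : Type) [CommRing T] [Algebra R T] [Algebra S T] [IsScalarTower R S T],
          F.obj T →ₗ[T] G.obj T //
        ∀ (T T' : Type) [CommRing T] [Algebra R T] [Algebra S T] [IsScalarTower R S T]
          [CommRing T'] [Algebra R T'] [Algebra S T'] [IsScalarTower R S T']
          (φ : T →ₐ[S] T') (x : F.obj T),
          g T' (F.map (AlgHom.restrictScalars R φ) x) = G.map φ (g T x)},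
      ∀ (R' : Type) [CommRing R'] [Algebra R R'] (x : F.obj R'),
        h R' x = g.1 (S ⊗[R] R') (F.map Algebra.TensorProduct.includeRight x) := by
  refine ⟨⟨ModuleFunctor.restrictionAdjoint h h_add h_smul, fun T T' _ _ _ _ _ _ _ _ ↦
      ModuleFunctor.restrictionAdjoint_naturality h h_add h_smul h_nat⟩,
    fun R' _ _ x ↦
      (ModuleFunctor.restrictionAdjoint_baseChange h h_add h_smul h_nat R' x).symm, ?_⟩
  rintro ⟨g, hg⟩ hgh
  ext T _ _ _ _ x
  rw [ModuleFunctor.eq_map_baseChangeCounit_of_naturality (fun T _ _ _ _ ↦ g T) hg, ← hgh]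
  rfl
end

section
/- For every functor of R-modules 𝕄 and every commutative R-algebra S, 𝕄*(S), defined as the set of S-linear natural transformations from 𝕄 restricted to S-algebras to the identity functor, is in natural bijection with the set of R-linear natural transformations from 𝕄 to the functor S' ↦ S ⊗_R S'. -/
open TensorProduct

universe v

/-- `𝕄*(S)`: the set of `S`-linear natural transformations, over commutative
`S`-algebras `T`, from `𝕄` restricted to `S`-algebras to the identity functor. -/
def DualAt (R : Type) [CommRing R] (F : ModuleFunctor.{0} R) (S : Type) [CommRing S]
    [Algebra R S] :=
  {u : ∀ (T : Type) [CommRing T] [Algebra R T] [Algebra S T] [IsScalarTower R S T],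
      F.obj T →ₗ[T] T //
    ∀ (T T' : Type) [CommRing T] [Algebra R T] [Algebra S T] [IsScalarTower R S T]
      [CommRing T'] [Algebra R T'] [Algebra S T'] [IsScalarTower R S T']
      (φ : T →ₐ[S] T') (x : F.obj T),
      u T' (F.map (AlgHom.restrictScalars R φ) x) = φ (u T x)}

/-!
Both directions use the multiplication maps `T ⊗_R S → T` and `S ⊗_R T → T` of an
`S`-algebra `T`. Given `v`, set `u_T := μ ∘ v_T` with `μ : T ⊗_R S → T`; naturality of `v`
and of `μ` makes `u` an element of `𝕄*(S)`, and on `T = S ⊗_R R'` the map `μ` undoes the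
base change `R' ⊗_R S → (S ⊗_R R') ⊗_R S`, which recovers `v`. Conversely, the
`S`-algebra map `S ⊗_R T → T` retracts `T → S ⊗_R T`, so naturality of any admissible `u`
forces `u_T(x) = μ(v_T(x))`.
-/

section TensorMul

variable (R S T : Type) [CommRing R] [CommRing S] [CommRing T] [Algebra R S] [Algebra R T]
  [Algebra S T] [IsScalarTower R S T]

noncomputable def tensorMul : T ⊗[R] S →ₐ[T] T :=
  Algebra.TensorProduct.lift (AlgHom.id T T) (IsScalarTower.toAlgHom R S T)
    fun _ _ => Commute.all _ _

noncomputable def tensorMul' : S ⊗[R] T →ₐ[S] T :=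
  Algebra.TensorProduct.lift (Algebra.ofId S T) (AlgHom.id R T) fun _ _ => Commute.all _ _

variable {R S T}

@[simp] lemma tensorMul_tmul (t : T) (s : S) : tensorMul R S T (t ⊗ₜ s) = t * algebraMap S T s :=
  Algebra.TensorProduct.lift_tmul _ _ _ t s

@[simp] lemma tensorMul'_tmul (s : S) (t : T) : tensorMul' R S T (s ⊗ₜ t) = algebraMap S T s * t :=
  Algebra.TensorProduct.lift_tmul _ _ _ s t

lemma tensorMul'_comp_includeRight :
    ((tensorMul' R S T).restrictScalars R).comp Algebra.TensorProduct.includeRight =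
      AlgHom.id R T := by
  ext t; simp

lemma tensorMul_comm (y : S ⊗[R] T) :
    tensorMul R S T (TensorProduct.comm R S T y) = tensorMul' R S T y := by
  induction y with
  | zero => simp
  | add a b ha hb => simp only [map_add, ha, hb]
  | tmul s t => simp [mul_comm]

lemma tensorMul_rTensor {T' : Type} [CommRing T'] [Algebra R T'] [Algebra S T']
    [IsScalarTower R S T'] (φ : T →ₐ[S] T') (y : T ⊗[R] S) :
    tensorMul R S T' ((φ.restrictScalars R).toLinearMap.rTensor S y) = φ (tensorMul R S T y) := by
  induction y with
  | zero => simp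
  | add a b ha hb => simp only [map_add, ha, hb]
  | tmul t s => simp

end TensorMul

lemma comm_tensorMul_rTensor_includeRight (R S R' : Type) [CommRing R] [CommRing S]
    [Algebra R S] [CommRing R'] [Algebra R R'] (y : R' ⊗[R] S) :
    TensorProduct.comm R S R' (tensorMul R S (S ⊗[R] R')
      ((Algebra.TensorProduct.includeRight (R := R) (A := S)).toLinearMap.rTensor S y)) = y := by
  induction y with
  | zero => simp
  | add a b ha hb => simp only [map_add, ha, hb]
  | tmul r s => simp [Algebra.TensorProduct.algebraMap_apply]

section Duality

variable {R : Type} [CommRing R] {F : ModuleFunctor.{0} R} {S : Type} [CommRing S]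
  [Algebra R S]

noncomputable def QCHom.toDualAt (v : QCHom R F S) : DualAt R F S :=
  ⟨fun T _ _ _ _ => (tensorMul R S T).toLinearMap ∘ₗ v.1 T, by
    intro T T' _ _ _ _ _ _ _ _ φ x
    simp only [LinearMap.comp_apply, AlgHom.toLinearMap_apply, v.2 T T' (φ.restrictScalars R) x,
      tensorMul_rTensor]⟩

lemma QCHom.apply_eq_comm_toDualAt (v : QCHom R F S) (R' : Type) [CommRing R'] [Algebra R R']
    (x : F.obj R') :
    v.1 R' x = TensorProduct.comm R S R'
      (v.toDualAt.1 (S ⊗[R] R') (F.map Algebra.TensorProduct.includeRight x)) := by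
  change _ = TensorProduct.comm R S R'
    (tensorMul R S (S ⊗[R] R') (v.1 (S ⊗[R] R') (F.map Algebra.TensorProduct.includeRight x)))
  rw [v.2 R' (S ⊗[R] R') Algebra.TensorProduct.includeRight x,
    comm_tensorMul_rTensor_includeRight]

lemma DualAt.apply_eq_tensorMul (v : QCHom R F S) (u : DualAt R F S)
    (hu : ∀ (R' : Type) [CommRing R'] [Algebra R R'] (x : F.obj R'),
      v.1 R' x = TensorProduct.comm R S R'
        (u.1 (S ⊗[R] R') (F.map Algebra.TensorProduct.includeRight x)))
    (T : Type) [CommRing T] [Algebra R T] [Algebra S T] [IsScalarTower R S T] (x : F.obj T) :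
    u.1 T x = tensorMul R S T (v.1 T x) := by
  calc u.1 T x
      = u.1 T (F.map (((tensorMul' R S T).restrictScalars R).comp
          Algebra.TensorProduct.includeRight) x) := by
        rw [tensorMul'_comp_includeRight, F.map_id]
    _ = tensorMul' R S T (u.1 (S ⊗[R] T) (F.map Algebra.TensorProduct.includeRight x)) := by
        rw [F.map_comp, u.2]
    _ = tensorMul R S T (v.1 T x) := by
        rw [hu T x, tensorMul_comm]

end Duality

/-- `𝕄*(S) = Hom_𝒦(𝕄, 𝒮)`: for every functor of `R`-modules `𝕄` and
commutative `R`-algebra `S`, every natural `R`-linear transformation `v : 𝕄 → 𝒮`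
(where `𝒮 : R' ↦ R' ⊗_R S` is the quasi-coherent module of `S`) comes from a unique
element `u ∈ 𝕄*(S)`, via `v_{R'}(x) = u_{S ⊗ R'}(x|_{S ⊗ R'})` (composed with the
symmetry of the tensor product). -/
theorem statement6 (R : Type) [CommRing R] (F : ModuleFunctor.{0} R)
    (S : Type) [CommRing S] [Algebra R S] (v : QCHom R F S) :
    ∃! u : DualAt R F S,
      ∀ (R' : Type) [CommRing R'] [Algebra R R'] (x : F.obj R'),
        v.1 R' x
          = (TensorProduct.comm R S R')
              (u.1 (S ⊗[R] R') (F.map Algebra.TensorProduct.includeRight x)) := by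
  refine ⟨v.toDualAt, v.apply_eq_comm_toDualAt, fun u hu => Subtype.ext ?_⟩
  funext T _ _ _ _
  ext x
  rw [DualAt.apply_eq_tensorMul v u hu, DualAt.apply_eq_tensorMul v _ v.apply_eq_comm_toDualAt]
end

section
/- Let 𝕄 be a functor of modules over a commutative ring R whose dual 𝕄* embeds into the dual of the quasi-coherent module associated to 𝕄(R) (i.e., 𝕄 is D-proquasi-coherent, meaning natural linear transformations 𝕄 → 𝒮 are determined by their value at R for every algebra S). Then for every R-module N, the map Hom_𝒦(𝕄, 𝒩) → Hom_R(𝕄(R), N), f ↦ f_R, is injective. -/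
open TensorProduct

universe v

/-! The square-zero extension `S = R ⊕ N` is a commutative `R`-algebra having `N` as an `R`-linear
direct summand. Composing with the inclusion `N → S` turns `f : 𝕄 → 𝒩` into `𝕄 → 𝒮`, which is
determined by its component at `R`; the projection `S → N` recovers `f`. -/

theorem LinearMap.baseChange_rTensor_comm {R : Type} [CommRing R] {M P : Type}
    [AddCommGroup M] [Module R M] [AddCommGroup P] [Module R P] (u : M →ₗ[R] P)
    {T T' : Type} [CommRing T] [Algebra R T] [CommRing T'] [Algebra R T']
    (φ : T →ₐ[R] T') (y : T ⊗[R] M) :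
    u.baseChange T' (φ.toLinearMap.rTensor M y) = φ.toLinearMap.rTensor P (u.baseChange T y) := by
  simp only [LinearMap.baseChange_eq_ltensor, ← LinearMap.comp_apply,
    LinearMap.lTensor_comp_rTensor, LinearMap.rTensor_comp_lTensor]

namespace QCHom

variable {R : Type} [CommRing R] {F : ModuleFunctor.{v} R}
  {N P : Type} [AddCommGroup N] [Module R N] [AddCommGroup P] [Module R P]

@[ext]
theorem ext {f g : QCHom R F N}
    (h : ∀ (S : Type) [CommRing S] [Algebra R S] (x : F.obj S), f.1 S x = g.1 S x) : f = g :=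
  Subtype.ext <| funext fun S => funext fun _ => funext fun _ => LinearMap.ext (h S)

def postcomp (u : N →ₗ[R] P) (f : QCHom R F N) : QCHom R F P :=
  ⟨fun S _ _ => u.baseChange S ∘ₗ f.1 S, fun S S' _ _ _ _ φ x => by
    rw [LinearMap.comp_apply, LinearMap.comp_apply, f.2 S S' φ x, u.baseChange_rTensor_comm]⟩

theorem postcomp_injective_of_comp_eq_id {u : N →ₗ[R] P} {r : P →ₗ[R] N}
    (hru : r ∘ₗ u = LinearMap.id) : Function.Injective (postcomp (F := F) u) := by
  intro f g hfg
  ext S _ _ x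
  have hS : r.baseChange S ∘ₗ u.baseChange S = LinearMap.id := by
    rw [← LinearMap.baseChange_comp, hru, LinearMap.baseChange_id]
  have hx : u.baseChange S (f.1 S x) = u.baseChange S (g.1 S x) :=
    congrArg (fun h : QCHom R F P => h.1 S x) hfg
  calc f.1 S x = (r.baseChange S ∘ₗ u.baseChange S) (f.1 S x) := by rw [hS]; rfl
    _ = (r.baseChange S ∘ₗ u.baseChange S) (g.1 S x) := congrArg (r.baseChange S) hx
    _ = g.1 S x := by rw [hS]; rfl

end QCHom

/-- If `𝕄` is D-proquasi-coherent (natural linear transformations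
`𝕄 → 𝒮` are determined by their component at `R`, for every commutative `R`-algebra
`S`), then for every `R`-module `N` the map `Hom_𝒦(𝕄, 𝒩) → Hom_R(𝕄(R), N)`,
`f ↦ f_R`, is injective. -/
theorem statement8 (R : Type) [CommRing R] (F : ModuleFunctor.{0} R)
    (hyp : ∀ (S : Type) [CommRing S] [Algebra R S],
      Function.Injective (fun f : QCHom R F S => f.1 R)) :
    ∀ (N : Type) [AddCommGroup N] [Module R N],
      Function.Injective (fun f : QCHom R F N => f.1 R) := by
  intro N _ _ f g hfg
  -- `TrivSqZeroExt` is built from a bimodule; over a commutative ring both actions coincide.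
  let _ : Module Rᵐᵒᵖ N := Module.compHom N ((RingHom.id R).fromOpposite mul_comm)
  have : IsCentralScalar R N := ⟨fun _ _ => rfl⟩
  have snd_comp_inr : TrivSqZeroExt.sndHom R N ∘ₗ TrivSqZeroExt.inrHom R N = LinearMap.id :=
    LinearMap.ext fun _ => rfl
  apply QCHom.postcomp_injective_of_comp_eq_id snd_comp_inr
  apply hyp (TrivSqZeroExt R N)
  exact congrArg (fun φ => (TrivSqZeroExt.inrHom R N).baseChange R ∘ₗ φ) hfg
end

section
/- Let M be a free R-module, M = ⊕_I R. Then the module scheme ℳ* (S ↦ Hom_R(M,S) ≅ ∏_I S) is D-proquasi-coherent: the natural map from natural linear transformations ℳ* → 𝒩 to R-linear maps ℳ*(R) → N is injective for every R-module N. -/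
/-!
By naturality, a transformation `F` is determined by its value on the universal point
`X = (X_i)_i ∈ ∏_I R[X_i]`. That value lies in `R[X_i] ⊗ N`, so it involves only finitely many
variables `J` and is fixed by the substitution killing the variables outside `J`. This substitution
moves `X` into `⊕_I R[X_i]`, where `F` is determined by the values `F_R(e_i)`, by linearity and
naturality along `R → R[X_i]`.
-/

open TensorProduct

namespace MvPolynomial

variable {R I : Type*} [CommSemiring R]

open scoped Classical in
noncomputable def restrictVars (J : Finset I) : MvPolynomial I R →ₐ[R] MvPolynomial I R :=
  aeval fun i => if i ∈ J then X i else 0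

theorem restrictVars_X [DecidableEq I] (J : Finset I) (i : I) :
    restrictVars (R := R) J (X i) = if i ∈ J then X i else 0 := by
  unfold restrictVars
  convert aeval_X _ i

theorem restrictVars_eq_self {J : Finset I} {p : MvPolynomial I R} (h : p.vars ⊆ J) :
    restrictVars J p = p := by
  classical
  exact aeval_ite_mem_eq_self p (s := (J : Set I)) (by exact_mod_cast h)

theorem exists_rTensor_restrictVars_eq_self {N : Type*} [AddCommMonoid N] [Module R N]
    (t : MvPolynomial I R ⊗[R] N) :
    ∃ J : Finset I, ∀ J', J ⊆ J' → (restrictVars J').toLinearMap.rTensor N t = t := by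
  classical
  induction t using TensorProduct.induction_on with
  | zero => exact ⟨∅, fun _ _ => map_zero _⟩
  | tmul p n =>
    exact ⟨p.vars, fun J' hJ' => by
      rw [LinearMap.rTensor_tmul, AlgHom.toLinearMap_apply, restrictVars_eq_self hJ']⟩
  | add t t' ht ht' =>
    obtain ⟨J, hJ⟩ := ht
    obtain ⟨J', hJ'⟩ := ht'
    exact ⟨J ∪ J', fun K hK => by
      rw [map_add, hJ K (Finset.union_subset_left hK), hJ' K (Finset.union_subset_right hK)]⟩

end MvPolynomial

open MvPolynomial

section NaturalTransformation

variable {R I N : Type} [CommRing R] [AddCommGroup N] [Module R N]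

def IsNaturalInAlgebra (F : ∀ (S : Type) [CommRing S] [Algebra R S], (I → S) →ₗ[S] S ⊗[R] N) :
    Prop :=
  ∀ (S S' : Type) [CommRing S] [Algebra R S] [CommRing S'] [Algebra R S']
    (φ : S →ₐ[R] S') (v : I → S),
    F S' (fun i => φ (v i)) = LinearMap.rTensor N φ.toLinearMap (F S v)

namespace IsNaturalInAlgebra

variable {F G : ∀ (S : Type) [CommRing S] [Algebra R S], (I → S) →ₗ[S] S ⊗[R] N}

theorem apply_eq_rTensor_aeval (hF : IsNaturalInAlgebra F) {S : Type} [CommRing S] [Algebra R S]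
    (v : I → S) : F S v = (aeval v).toLinearMap.rTensor N (F (MvPolynomial I R) X) := by
  simpa using hF _ S (aeval v) X

theorem apply_eq_sum_of_support_subset (hF : IsNaturalInAlgebra F) [DecidableEq I]
    {S : Type} [CommRing S] [Algebra R S] (J : Finset I) (v : I → S) (hv : ∀ i ∉ J, v i = 0) :
    F S v = ∑ i ∈ J, v i • (Algebra.ofId R S).toLinearMap.rTensor N (F R (Pi.single i 1)) := by
  have hv_sum : v = ∑ i ∈ J, v i • Pi.single i 1 := by
    funext j
    by_cases hj : j ∈ J <;> simp [Finset.sum_apply, Pi.single_apply, hj, hv]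
  have h_single (i : I) : (fun j => Algebra.ofId R S ((Pi.single i 1 : I → R) j)) = Pi.single i 1 := by
    funext j
    rw [Pi.apply_single (fun _ => Algebra.ofId R S) (fun _ => map_zero _), map_one]
  conv_lhs => rw [hv_sum, map_sum]
  refine Finset.sum_congr rfl fun i _ => ?_
  rw [map_smul, ← h_single, hF]

theorem ext (hF : IsNaturalInAlgebra F) (hG : IsNaturalInAlgebra G) (h : F R = G R) : F = G := by
  classical
  set A := MvPolynomial I R
  obtain ⟨JF, hJF⟩ := exists_rTensor_restrictVars_eq_self (F A X)
  obtain ⟨JG, hJG⟩ := exists_rTensor_restrictVars_eq_self (G A X)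
  set J := JF ∪ JG
  have h_supp : ∀ i ∉ J, restrictVars J (X i : A) = 0 := fun i hi => by
    simp [restrictVars_X, hi]
  have h_universal : F A X = G A X := calc
    F A X = (restrictVars J).toLinearMap.rTensor N (F A X) := (hJF J Finset.subset_union_left).symm
    _ = F A (fun i => restrictVars J (X i)) := (hF A A _ X).symm
    _ = G A (fun i => restrictVars J (X i)) := by
      rw [hF.apply_eq_sum_of_support_subset J _ h_supp,
        hG.apply_eq_sum_of_support_subset J _ h_supp, h]
    _ = (restrictVars J).toLinearMap.rTensor N (G A X) := hG A A _ X
    _ = G A X := hJG J Finset.subset_union_right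
  funext S _ _
  ext v
  rw [hF.apply_eq_rTensor_aeval, hG.apply_eq_rTensor_aeval, h_universal]

end IsNaturalInAlgebra

end NaturalTransformation

/-- For a free `R`-module `M = ⊕_I R`, the module scheme
`ℳ* : S ↦ Hom_R(M, S) ≅ ∏_I S` is D-proquasi-coherent: for every `R`-module `N`, a
natural `R`-linear transformation `ℳ* → 𝒩` (where `𝒩(S) = S ⊗_R N`) is determined by
its component at `R`. -/
theorem statement15 (R : Type) [CommRing R] (I : Type)
    (N : Type) [AddCommGroup N] [Module R N] :
    Function.Injective
      (fun f : {f : ∀ (S : Type) [CommRing S] [Algebra R S], (I → S) →ₗ[S] S ⊗[R] N //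
          ∀ (S S' : Type) [CommRing S] [Algebra R S] [CommRing S'] [Algebra R S']
            (φ : S →ₐ[R] S') (v : I → S),
            f S' (fun i => φ (v i)) = LinearMap.rTensor N φ.toLinearMap (f S v)} =>
        f.1 R) := by
  rintro ⟨F, hF⟩ ⟨G, hG⟩ h
  exact Subtype.ext (IsNaturalInAlgebra.ext hF hG h)
end

section
/- Let R be a commutative ring and M an R-module. Then the functor of R-linear natural transformations from the functor S ↦ ∏_I S to the functor S ↦ M ⊗_R S is the direct sum ⊕_I ℳ: that is, ℋom_𝒦(∏_I 𝒦, ℳ)(S) ≅ ⊕_I (M ⊗_R S) naturally in S. In particular every natural linear transformation ∏_I 𝒦 → ℳ factors through a finite subproduct. -/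
/-!
Evaluating a natural transformation `f` at the universal point `X` of `S[X_i | i ∈ I]` gives
`u = f(X) ∈ S[X] ⊗[R] M`, and naturality yields `f(v) = (aeval v ⊗ id)(u)` for every `v`.
Comparing `f` at the points `(t X_i)_i` and `(X_i)_i` of `S[t, X]`, naturality turns the first
into `u(t X)`, where a monomial of degree `k` picks up `t ^ k`, while linearity turns it into
`t • u(X)`. Hence only monomials of degree one occur in `u`, i.e. `u = ∑ᵢ X_i • a_i` for a
unique finitely supported family `a`, and then `f(v) = ∑ᵢ v_i • a_i`.
-/

open TensorProduct

theorem Finsupp.single_none_add_mapDomain_some {α M : Type*} [AddCommMonoid M] (m : M)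
    (f : α →₀ M) : single none m + f.mapDomain Option.some = f.optionElim m := by
  ext (_ | a)
  · simp [mapDomain_of_notMem_range]
  · simp [mapDomain_apply (Option.some_injective α)]

theorem LinearMap.rTensor_mulLeft_apply {R A N : Type*} [CommSemiring R] [Semiring A]
    [Algebra R A] [AddCommMonoid N] [Module R N] (a : A) (y : A ⊗[R] N) :
    (LinearMap.mulLeft R a).rTensor N y = a • y := by
  induction y using TensorProduct.induction_on with
  | zero => simp
  | tmul b n => rfl
  | add y z hy hz => rw [map_add, hy, hz, smul_add]

theorem AlgHom.rTensor_smul {R A B N : Type*} [CommSemiring R] [Semiring A] [Semiring B]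
    [Algebra R A] [Algebra R B] [AddCommMonoid N] [Module R N] (φ : A →ₐ[R] B) (a : A)
    (y : A ⊗[R] N) :
    φ.toLinearMap.rTensor N (a • y) = φ a • φ.toLinearMap.rTensor N y := by
  induction y using TensorProduct.induction_on with
  | zero => simp
  | tmul b n => simp [smul_tmul']
  | add y z hy hz => rw [smul_add, map_add, hy, hz, map_add, smul_add]

namespace Finsupp

variable {R S N I : Type*} [CommSemiring R] [CommSemiring S] [Algebra R S]
  [AddCommMonoid N] [Module R N]

noncomputable def sumSMulBaseChange {T : Type*} [Semiring T] [Algebra R T] [Algebra S T]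
    [IsScalarTower R S T] (a : I →₀ S ⊗[R] N) (v : I → T) : T ⊗[R] N :=
  a.sum fun i x => v i • (IsScalarTower.toAlgHom R S T).toLinearMap.rTensor N x

theorem rTensor_sumSMulBaseChange {A B : Type*} [Semiring A] [Algebra R A] [Algebra S A]
    [IsScalarTower R S A] [Semiring B] [Algebra R B] [Algebra S B] [IsScalarTower R S B]
    (φ : A →ₐ[S] B) (a : I →₀ S ⊗[R] N) (v : I → A) :
    (φ.restrictScalars R).toLinearMap.rTensor N (a.sumSMulBaseChange v) =
      a.sumSMulBaseChange (φ ∘ v) := by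
  have hφ : (φ.restrictScalars R).comp (IsScalarTower.toAlgHom R S A) =
      IsScalarTower.toAlgHom R S B := AlgHom.ext φ.commutes
  simp only [sumSMulBaseChange, map_finsuppSum, AlgHom.rTensor_smul,
    ← LinearMap.rTensor_comp_apply, ← AlgHom.comp_toLinearMap, hφ]
  rfl

end Finsupp

namespace MvPolynomial

variable {R S N σ τ : Type*} [CommSemiring R] [CommSemiring S] [Algebra R S]
  [AddCommMonoid N] [Module R N]

open scoped Classical in
noncomputable def rTensor :
    MvPolynomial σ S ⊗[R] N ≃ₗ[S] (σ →₀ ℕ) →₀ S ⊗[R] N :=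
  AlgebraTensorModule.congr (AddMonoidAlgebra.coeffLinearEquiv S) (LinearEquiv.refl R N) ≪≫ₗ
    finsuppLeft R S S N (σ →₀ ℕ)

theorem rTensor_monomial_tmul (e : σ →₀ ℕ) (s : S) (n : N) :
    rTensor (monomial e s ⊗ₜ[R] n) = Finsupp.single e (s ⊗ₜ[R] n) := by
  rw [eq_comm, ← LinearEquiv.symm_apply_eq]
  simp [rTensor, monomial]

theorem rTensor_rTensor_of_map_monomial (L : MvPolynomial σ S →ₗ[R] MvPolynomial τ S)
    (g : (σ →₀ ℕ) → τ →₀ ℕ) (hL : ∀ ν s, L (monomial ν s) = monomial (g ν) s)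
    (x : MvPolynomial σ S ⊗[R] N) :
    rTensor (L.rTensor N x) = (rTensor x).mapDomain g := by
  induction x using TensorProduct.induction_on with
  | zero => simp
  | tmul p n =>
    induction p using MvPolynomial.induction_on' with
    | monomial ν s =>
      rw [LinearMap.rTensor_tmul, hL, rTensor_monomial_tmul, rTensor_monomial_tmul,
        Finsupp.mapDomain_single]
    | add p q hp hq => rw [add_tmul, map_add, map_add, hp, hq, map_add, Finsupp.mapDomain_add]
  | add y z hy hz => rw [map_add, map_add, hy, hz, map_add, Finsupp.mapDomain_add]

theorem rTensor_X_smul_rTensor_algebraMap (i : σ) (x : S ⊗[R] N) :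
    rTensor ((X i : MvPolynomial σ S) •
      (IsScalarTower.toAlgHom R S (MvPolynomial σ S)).toLinearMap.rTensor N x) =
      Finsupp.single (Finsupp.single i 1) x := by
  induction x using TensorProduct.induction_on with
  | zero => simp
  | tmul s n =>
    rw [LinearMap.rTensor_tmul, smul_tmul', smul_eq_mul, AlgHom.toLinearMap_apply,
      IsScalarTower.coe_toAlgHom', algebraMap_eq, mul_comm, C_mul_X_eq_monomial,
      rTensor_monomial_tmul]
  | add y z hy hz => rw [map_add, smul_add, map_add, hy, hz, Finsupp.single_add]

theorem rTensor_sumSMulBaseChange_X (a : σ →₀ S ⊗[R] N) :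
    rTensor (a.sumSMulBaseChange X) = a.mapDomain (Finsupp.single · 1) := by
  simp only [Finsupp.sumSMulBaseChange, map_finsuppSum, rTensor_X_smul_rTensor_algebraMap]
  rfl

theorem sumSMulBaseChange_X_injective :
    Function.Injective fun a : σ →₀ S ⊗[R] N =>
      a.sumSMulBaseChange (X : σ → MvPolynomial σ S) := by
  intro a a' h
  have h' := congrArg rTensor h
  simp only [rTensor_sumSMulBaseChange_X] at h'
  exact Finsupp.mapDomain_injective (Finsupp.single_left_injective one_ne_zero) h'

theorem exists_eq_sumSMulBaseChange_X (u : MvPolynomial σ S ⊗[R] N)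
    (hu : ∀ μ : σ →₀ ℕ, μ.degree ≠ 1 → rTensor u μ = 0) :
    ∃ a : σ →₀ S ⊗[R] N, u = a.sumSMulBaseChange X := by
  have hinj := Finsupp.single_left_injective (α := σ) (one_ne_zero (α := ℕ))
  refine ⟨(rTensor u).comapDomain _ hinj.injOn, rTensor.injective ?_⟩
  rw [rTensor_sumSMulBaseChange_X, Finsupp.mapDomain_comapDomain _ hinj]
  rw [Finsupp.range_single_one]
  intro μ hμ
  by_contra hdeg
  exact Finsupp.mem_support_iff.mp hμ (hu μ hdeg)

/-- The substitution `X i ↦ X none * X (some i)`: it multiplies a monomial of degree `k`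
by `X none ^ k`. -/
noncomputable def dilate : MvPolynomial σ S →ₐ[S] MvPolynomial (Option σ) S :=
  AddMonoidAlgebra.mapDomainAlgHom S S
    ((Finsupp.singleAddHom none).comp Finsupp.degree + Finsupp.mapDomain.addMonoidHom Option.some)

theorem dilate_monomial (ν : σ →₀ ℕ) (s : S) :
    dilate (monomial ν s) = monomial (ν.optionElim ν.degree) s := by
  rw [← Finsupp.single_none_add_mapDomain_some]
  exact AddMonoidAlgebra.mapDomain_single

theorem dilate_X (i : σ) : dilate (X i : MvPolynomial σ S) = X none * X (some i) := by
  rw [X, dilate_monomial, X, X, monomial_mul, one_mul, ← Finsupp.single_none_add_mapDomain_some,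
    Finsupp.degree_single, Finsupp.mapDomain_single]

theorem X_none_mul_rename_some_monomial (ν : σ →₀ ℕ) (s : S) :
    X none * rename some (monomial ν s) = monomial (ν.optionElim 1) s := by
  rw [rename_monomial, X, monomial_mul, one_mul, Finsupp.single_none_add_mapDomain_some]

theorem rTensor_apply_eq_zero_of_rTensor_dilate (u : MvPolynomial σ S ⊗[R] N)
    (h : (dilate.restrictScalars R).toLinearMap.rTensor N u =
      (X none : MvPolynomial (Option σ) S) •
        ((rename some).restrictScalars R).toLinearMap.rTensor N u)
    (μ : σ →₀ ℕ) (hμ : μ.degree ≠ 1) : rTensor u μ = 0 := by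
  have key := congrArg rTensor h
  rw [← LinearMap.rTensor_mulLeft_apply, ← LinearMap.rTensor_comp_apply,
    rTensor_rTensor_of_map_monomial _ _ dilate_monomial,
    rTensor_rTensor_of_map_monomial _ (·.optionElim 1) X_none_mul_rename_some_monomial] at key
  have hinj : Function.Injective fun ν : σ →₀ ℕ => ν.optionElim ν.degree :=
    fun ν ν' h => by simpa using congrArg Finsupp.some h
  have hμ' : μ.optionElim μ.degree ∉ Set.range fun ν : σ →₀ ℕ => ν.optionElim 1 := by
    rintro ⟨ν, hν⟩
    exact hμ (by simpa using (DFunLike.congr_fun hν none).symm)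
  simpa [Finsupp.mapDomain_apply hinj, Finsupp.mapDomain_of_notMem_range _ _ hμ'] using
    DFunLike.congr_fun key (μ.optionElim μ.degree)

end MvPolynomial

open MvPolynomial

/-- `ℋom_𝒦(∏_I 𝒦, ℳ) = ⊕_I ℳ`.  For every commutative `R`-algebra `S`,
every `S`-linear natural transformation `f` (over commutative `S`-algebras `T`) from
`T ↦ ∏_I T` to `T ↦ T ⊗_R M` comes from a unique finitely supported family
`a : I →₀ S ⊗_R M`, via `f(v) = ∑_i v_i • a_i`; in particular `f` factors through a
finite subproduct. -/
theorem statement16 (R : Type) [CommRing R] (M : Type) [AddCommGroup M] [Module R M]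
    (I : Type) (S : Type) [CommRing S] [Algebra R S]
    (f : {f : ∀ (T : Type) [CommRing T] [Algebra R T] [Algebra S T] [IsScalarTower R S T],
            (I → T) →ₗ[T] T ⊗[R] M //
          ∀ (T T' : Type) [CommRing T] [Algebra R T] [Algebra S T] [IsScalarTower R S T]
            [CommRing T'] [Algebra R T'] [Algebra S T'] [IsScalarTower R S T']
            (φ : T →ₐ[S] T') (v : I → T),
            f T' (fun i => φ (v i))
              = LinearMap.rTensor M (AlgHom.restrictScalars R φ).toLinearMap (f T v)}) :
    (∃! a : I →₀ S ⊗[R] M,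
        ∀ (T : Type) [CommRing T] [Algebra R T] [Algebra S T] [IsScalarTower R S T]
          (v : I → T),
          f.1 T v = a.sum fun i x =>
            v i • LinearMap.rTensor M (IsScalarTower.toAlgHom R S T).toLinearMap x) ∧
    (∃ J : Finset I,
        ∀ (T : Type) [CommRing T] [Algebra R T] [Algebra S T] [IsScalarTower R S T]
          (v v' : I → T), (∀ i ∈ J, v i = v' i) → f.1 T v = f.1 T v') := by
  obtain ⟨F, hF⟩ := f
  set u := F (MvPolynomial I S) X
  have universal : ∀ (T : Type) [CommRing T] [Algebra R T] [Algebra S T] [IsScalarTower R S T]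
      (v : I → T), F T v = ((aeval v).restrictScalars R).toLinearMap.rTensor M u := by
    intro T _ _ _ _ v
    simpa using hF _ T (aeval v) X
  have hdilate : (dilate.restrictScalars R).toLinearMap.rTensor M u =
      (X none : MvPolynomial (Option I) S) •
        ((rename some).restrictScalars R).toLinearMap.rTensor M u := by
    rw [← hF, ← hF, ← map_smul]
    congr 1
    ext i
    simp [dilate_X]
  obtain ⟨a, ha⟩ :=
    exists_eq_sumSMulBaseChange_X u (rTensor_apply_eq_zero_of_rTensor_dilate u hdilate)
  have formula : ∀ (T : Type) [CommRing T] [Algebra R T] [Algebra S T] [IsScalarTower R S T]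
      (v : I → T), F T v = a.sumSMulBaseChange v := by
    intro T _ _ _ _ v
    rw [universal, ha, Finsupp.rTensor_sumSMulBaseChange]
    congr 1
    ext i
    exact aeval_X v i
  refine ⟨⟨a, formula, fun a' ha' => sumSMulBaseChange_X_injective ?_⟩, a.support, ?_⟩
  · exact (ha' _ X).symm.trans ha
  · intro T _ _ _ _ v v' hvv
    rw [formula, formula]
    exact Finsupp.sum_congr fun i hi => by rw [hvv i hi]
end

section
/- Let 𝕄 belong to the family 𝔉 (i.e., 𝕄 is a dual functor of R-modules admitting inclusions of ∏_J ℛ-modules ⊕_J ℛ ⊆ 𝕄 ⊆ ∏_J ℛ for some set J). If moreover 𝕄 is quasi-coherent, 𝕄 = ℳ for an R-module M, then M is a free R-module, M = ⊕_J R. -/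
/-!
Base-change `x ∈ R ⊗ M` to the product ring `P = ∏_J R` and use the `∏_J ℛ`-action, with the
unit vectors `(e_j)_j ∈ ∏_J P`, to get `ζ ∈ P ⊗ M` with coordinates `β ζ j = e_j · β x j`. Every coordinate of `ζ` is finitely
supported, so `ζ` dies in `(P ⧸ ⊕_J R) ⊗ M` (injectivity of `β` there); by right exactness of
`- ⊗ M`, `ζ` then comes from `(⊕_J R) ⊗ M`, so its evaluation at all but finitely many `k` vanishes.
Evaluating at `k` recovers `β x k`, hence `β x ∈ ⊕_J R`, i.e. `α` is onto.
-/

open TensorProduct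

def finiteSupportIdeal (R J : Type*) [CommRing R] : Ideal (J → R) where
  carrier := {g | (Function.support g).Finite}
  add_mem' ha hb := (ha.union hb).subset (Function.support_add _ _)
  zero_mem' := by simp
  smul_mem' c _ hg := hg.subset (Function.support_mul_subset_right c _)

theorem mem_finiteSupportIdeal {R J : Type*} [CommRing R] {g : J → R} :
    g ∈ finiteSupportIdeal R J ↔ (Function.support g).Finite :=
  Iff.rfl

theorem eventually_rTensor_proj_eq_zero {R J M : Type*} [CommRing R] [AddCommGroup M]
    [Module R M] {N : Submodule R (J → R)} (hN : ∀ g ∈ N, (Function.support g).Finite)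
    (t : N ⊗[R] M) :
    ∀ᶠ k in Filter.cofinite, LinearMap.rTensor M (LinearMap.proj k ∘ₗ N.subtype) t = 0 := by
  induction t using TensorProduct.induction_on with
  | zero => simp
  | tmul g m =>
    filter_upwards [(hN g g.2).compl_mem_cofinite] with k hk
    simp [Function.notMem_support.mp hk]
  | add u v hu hv =>
    filter_upwards [hu, hv] with k hku hkv
    rw [map_add, hku, hkv, add_zero]

section

variable {R : Type} [CommRing R] {J : Type} {M : Type} [AddCommGroup M] [Module R M]
  {β : ∀ (S : Type) [CommRing S] [Algebra R S], (S ⊗[R] M) →ₗ[S] (J → S)}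

theorem rTensor_quotient_mk_eq_zero
    (hβnat : ∀ (S S' : Type) [CommRing S] [Algebra R S] [CommRing S'] [Algebra R S']
      (φ : S →ₐ[R] S') (x : S ⊗[R] M),
      β S' (LinearMap.rTensor M φ.toLinearMap x) = fun j => φ (β S x j))
    (hβinj : ∀ (S : Type) [CommRing S] [Algebra R S], Function.Injective (β S))
    {A : Type} [CommRing A] [Algebra R A] (I : Ideal A) {z : A ⊗[R] M}
    (hz : ∀ j, β A z j ∈ I) :
    LinearMap.rTensor M (Ideal.Quotient.mkₐ R I).toLinearMap z = 0 := by
  apply hβinj (A ⧸ I)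
  rw [hβnat A (A ⧸ I), map_zero]
  funext j
  exact Ideal.Quotient.eq_zero_iff_mem.mpr (hz j)

theorem exists_beta_eq_single
    (hβnat : ∀ (S S' : Type) [CommRing S] [Algebra R S] [CommRing S'] [Algebra R S']
      (φ : S →ₐ[R] S') (x : S ⊗[R] M),
      β S' (LinearMap.rTensor M φ.toLinearMap x) = fun j => φ (β S x j))
    (hclosed : ∀ (S : Type) [CommRing S] [Algebra R S] (a : J → S) (x : S ⊗[R] M),
      ∃ y : S ⊗[R] M, β S y = fun j => a j * β S x j)
    [DecidableEq J] (x : R ⊗[R] M) :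
    ∃ ζ : (J → R) ⊗[R] M, β (J → R) ζ = fun j => Pi.single j (β R x j) := by
  obtain ⟨ζ, hζ⟩ := hclosed (J → R) (fun j => Pi.single j 1)
    (LinearMap.rTensor M (Algebra.ofId R (J → R)).toLinearMap x)
  refine ⟨ζ, ?_⟩
  rw [hζ, hβnat R (J → R)]
  funext j
  change Pi.single j 1 * (fun _ => β R x j) = _
  rw [← Pi.single_mul_left, one_mul]

theorem finite_support_beta
    (hβnat : ∀ (S S' : Type) [CommRing S] [Algebra R S] [CommRing S'] [Algebra R S']
      (φ : S →ₐ[R] S') (x : S ⊗[R] M),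
      β S' (LinearMap.rTensor M φ.toLinearMap x) = fun j => φ (β S x j))
    (hβinj : ∀ (S : Type) [CommRing S] [Algebra R S], Function.Injective (β S))
    (hclosed : ∀ (S : Type) [CommRing S] [Algebra R S] (a : J → S) (x : S ⊗[R] M),
      ∃ y : S ⊗[R] M, β S y = fun j => a j * β S x j)
    (x : R ⊗[R] M) :
    (Function.support (β R x)).Finite := by
  classical
  set I := finiteSupportIdeal R J
  set π := (Ideal.Quotient.mkₐ R I).toLinearMap
  obtain ⟨ζ, hζ⟩ := exists_beta_eq_single hβnat hclosed x
  have hζπ : LinearMap.rTensor M π ζ = 0 :=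
    rTensor_quotient_mk_eq_zero hβnat hβinj I fun j => by
      rw [hζ, mem_finiteSupportIdeal]
      exact (Set.finite_singleton j).subset (Pi.support_single_subset)
  obtain ⟨t, rfl⟩ := (rTensor_exact M (LinearMap.exact_subtype_ker_map π)
    Ideal.Quotient.mk_surjective ζ).mp hζπ
  have hker : ∀ g ∈ LinearMap.ker π, (Function.support g).Finite := fun g hg =>
    mem_finiteSupportIdeal.mp (Ideal.Quotient.eq_zero_iff_mem.mp hg)
  refine (eventually_rTensor_proj_eq_zero hker t).mono fun k hk => ?_
  have hnat := congrFun (hβnat (J → R) R (Pi.evalAlgHom R (fun _ => R) k)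
    (LinearMap.rTensor M (LinearMap.ker π).subtype t)) k
  rw [← LinearMap.rTensor_comp_apply,
    show (Pi.evalAlgHom R (fun _ => R) k).toLinearMap = LinearMap.proj k from rfl] at hnat
  rw [hk, map_zero, hζ] at hnat
  simpa using hnat.symm

end

theorem statement18_general (R : Type) [CommRing R] (J : Type)
    (M : Type) [AddCommGroup M] [Module R M]
    (β : ∀ (S : Type) [CommRing S] [Algebra R S], (S ⊗[R] M) →ₗ[S] (J → S))
    (hβnat : ∀ (S S' : Type) [CommRing S] [Algebra R S] [CommRing S'] [Algebra R S']
      (φ : S →ₐ[R] S') (x : S ⊗[R] M),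
      β S' (LinearMap.rTensor M φ.toLinearMap x) = fun j => φ (β S x j))
    (hβinj : ∀ (S : Type) [CommRing S] [Algebra R S], Function.Injective (β S))
    (α : ∀ (S : Type) [CommRing S] [Algebra R S], (J →₀ S) →ₗ[S] (S ⊗[R] M))
    (hαβ : ∀ (S : Type) [CommRing S] [Algebra R S] (v : J →₀ S),
      β S (α S v) = fun j => v j)
    (hclosed : ∀ (S : Type) [CommRing S] [Algebra R S] (a : J → S) (x : S ⊗[R] M),
      ∃ y : S ⊗[R] M, β S y = fun j => a j * β S x j) :
    Nonempty (Module.Basis J R M) := by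
  have hinj : Function.Injective (α R) := fun v w h =>
    DFunLike.coe_injective (by simpa only [hαβ] using congrArg (β R) h)
  have hsurj : Function.Surjective (α R) := fun x =>
    ⟨Finsupp.ofSupportFinite _ (finite_support_beta hβnat hβinj hclosed x),
      hβinj R (by rw [hαβ]; rfl)⟩
  exact ⟨Module.Basis.ofRepr ((TensorProduct.lid R M).symm ≪≫ₗ
    (LinearEquiv.ofBijective (α R) ⟨hinj, hsurj⟩).symm)⟩

/-- If the quasi-coherent module `ℳ : S ↦ S ⊗_R M` belongs to the family
`𝔉`, i.e. it admits natural `∏_J ℛ`-linear inclusions `⊕_J ℛ ⊆ ℳ ⊆ ∏_J ℛ` (with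
composite the obvious inclusion and with image stable under the componentwise action
of `∏_J ℛ`), then `M` is a free `R`-module with basis indexed by `J`. -/
theorem statement18 (R : Type) [CommRing R] (J : Type) [DecidableEq J]
    (M : Type) [AddCommGroup M] [Module R M]
    (β : ∀ (S : Type) [CommRing S] [Algebra R S], (S ⊗[R] M) →ₗ[S] (J → S))
    (hβnat : ∀ (S S' : Type) [CommRing S] [Algebra R S] [CommRing S'] [Algebra R S']
      (φ : S →ₐ[R] S') (x : S ⊗[R] M),
      β S' (LinearMap.rTensor M φ.toLinearMap x) = fun j => φ (β S x j))
    (hβinj : ∀ (S : Type) [CommRing S] [Algebra R S], Function.Injective (β S))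
    (α : ∀ (S : Type) [CommRing S] [Algebra R S], (J →₀ S) →ₗ[S] (S ⊗[R] M))
    (hαnat : ∀ (S S' : Type) [CommRing S] [Algebra R S] [CommRing S'] [Algebra R S']
      (φ : S →ₐ[R] S') (v : J →₀ S),
      α S' (Finsupp.mapRange (⇑φ) (map_zero φ) v)
        = LinearMap.rTensor M φ.toLinearMap (α S v))
    (hαinj : ∀ (S : Type) [CommRing S] [Algebra R S], Function.Injective (α S))
    (hαβ : ∀ (S : Type) [CommRing S] [Algebra R S] (v : J →₀ S),
      β S (α S v) = fun j => v j)
    (hclosed : ∀ (S : Type) [CommRing S] [Algebra R S] (a : J → S) (x : S ⊗[R] M),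
      ∃ y : S ⊗[R] M, β S y = fun j => a j * β S x j) :
    Nonempty (Module.Basis J R M) :=
  statement18_general R J M β hβnat hβinj α hαβ hclosed
end
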